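/- arXiv:2101.02687 — 2 statements merged into one kernel-verified Lean document; each statement's English description precedes it below -/
import Mathlib

section
/- A future-directed causal curve in Minkowski space-time contained in a causal diamond has finite Euclidean length: if c : [a,b] → 𝕄 is a future-directed causal curve whose image lies in J⁺(x) ∩ J⁻(y), then the Euclidean length of c is at most √2 · (t(y) − t(x)). -/
noncomputable section

open Set Filter

/-- Minkowski space-time `𝕄 = ℝ × EuclideanSpace ℝ (Fin 3)`, equipped with the Euclidean
norm `‖(t,x)‖ = √(t² + ‖x‖²)` (i.e. the `L²` product norm). -/
abbrev Mink : Type := WithLp 2 (ℝ × EuclideanSpace ℝ (Fin 3))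

/-- The future causal cone `C = {(t,x) : ‖x‖ ≤ t}`. -/
def causalCone : Set Mink := {p | ‖p.ofLp.2‖ ≤ p.ofLp.1}

/-- The future chronological cone `C° = {(t,x) : ‖x‖ < t}` (the interior of `C`). -/
def chronCone : Set Mink := {p | ‖p.ofLp.2‖ < p.ofLp.1}

/-- `causalLE x y` (written `x ≤ y`): `x` causally precedes `y`, i.e. `y - x ∈ C`. -/
def causalLE (x y : Mink) : Prop := y - x ∈ causalCone

/-- `chronLT x y` (written `x ≪ y`): `x` chronologically precedes `y`, i.e. `y - x ∈ C°`. -/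
def chronLT (x y : Mink) : Prop := y - x ∈ chronCone

/-- The chronological past `I⁻(x) = {z : z ≪ x}`. -/
def Iminus (x : Mink) : Set Mink := {z | chronLT z x}

/-- The causal past `J⁻(x) = {z : z ≤ x}`. -/
def Jminus (x : Mink) : Set Mink := {z | causalLE z x}

/-- The causal future `J⁺(x) = {z : x ≤ z}`. -/
def Jplus (x : Mink) : Set Mink := {z | causalLE x z}

/-- A future-directed causal curve on an interval `I ⊆ ℝ`: a continuous map `c : I → 𝕄`
such that `c t - c s ∈ C` and `c s ≠ c t` whenever `s < t` in `I`. -/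
def IsFDCausalOn (c : ℝ → Mink) (I : Set ℝ) : Prop :=
  ContinuousOn c I ∧ ∀ s ∈ I, ∀ t ∈ I, s < t → c t - c s ∈ causalCone ∧ c s ≠ c t

/-! On the future causal cone the Euclidean norm is at most `√2` times the time component, so
every chord of a future-directed causal curve is at most `√2` times its time increment. Summing
over a partition, the variation of the curve is at most `√2` times the variation of its time
coordinate, which is monotone and hence varies by `t(c b) - t(c a) ≤ t(y) - t(x)`. -/

open scoped ENNReal

theorem eVariationOn_le_mul_of_edist_le {α E F : Type*} [LinearOrder α] [PseudoEMetricSpace E]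
    [PseudoEMetricSpace F] {f : α → E} {g : α → F} {s : Set α} {C : ℝ≥0∞}
    (h : ∀ x ∈ s, ∀ y ∈ s, x ≤ y → edist (f y) (f x) ≤ C * edist (g y) (g x)) :
    eVariationOn f s ≤ C * eVariationOn g s := by
  refine iSup_le fun ⟨n, u, hu, us⟩ => ?_
  calc ∑ i ∈ Finset.range n, edist (f (u (i + 1))) (f (u i))
      ≤ ∑ i ∈ Finset.range n, C * edist (g (u (i + 1))) (g (u i)) :=
        Finset.sum_le_sum fun i _ => h _ (us i) _ (us (i + 1)) (hu i.le_succ)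
    _ = C * ∑ i ∈ Finset.range n, edist (g (u (i + 1))) (g (u i)) := by rw [Finset.mul_sum]
    _ ≤ C * eVariationOn g s := by grw [eVariationOn.sum_le (f := g) hu us]

theorem fst_nonneg_of_mem_causalCone {p : Mink} (hp : p ∈ causalCone) : 0 ≤ p.ofLp.1 :=
  (norm_nonneg _).trans hp

theorem norm_le_sqrt_two_mul_fst_of_mem_causalCone {p : Mink} (hp : p ∈ causalCone) :
    ‖p‖ ≤ Real.sqrt 2 * p.ofLp.1 := by
  have ht := fst_nonneg_of_mem_causalCone hp
  have hx : ‖p.ofLp.2‖ ≤ p.ofLp.1 := hp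
  refine (pow_le_pow_iff_left₀ (norm_nonneg p) (by positivity) two_ne_zero).mp ?_
  rw [WithLp.prod_norm_sq_eq_of_L2, ← WithLp.ofLp_fst, ← WithLp.ofLp_snd, mul_pow,
    Real.sq_sqrt zero_le_two, Real.norm_eq_abs, sq_abs]
  nlinarith [norm_nonneg p.ofLp.2]

theorem causalLE.fst_le {p q : Mink} (h : causalLE p q) : p.ofLp.1 ≤ q.ofLp.1 :=
  sub_nonneg.mp (fst_nonneg_of_mem_causalCone h)

theorem causalLE_refl (p : Mink) : causalLE p p := by
  simp [causalLE, causalCone]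

theorem edist_le_sqrt_two_mul_edist_fst_of_causalLE {p q : Mink} (h : causalLE p q) :
    edist q p ≤ ENNReal.ofReal (Real.sqrt 2) * edist q.ofLp.1 p.ofLp.1 :=
  calc edist q p = ENNReal.ofReal ‖q - p‖ := by rw [edist_dist, dist_eq_norm]
    _ ≤ ENNReal.ofReal (Real.sqrt 2 * (q - p).ofLp.1) :=
      ENNReal.ofReal_le_ofReal (norm_le_sqrt_two_mul_fst_of_mem_causalCone h)
    _ = ENNReal.ofReal (Real.sqrt 2) * edist q.ofLp.1 p.ofLp.1 := by
      rw [ENNReal.ofReal_mul (Real.sqrt_nonneg 2), edist_dist, Real.dist_eq,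
        abs_of_nonneg (sub_nonneg.mpr h.fst_le)]
      rfl

theorem eVariationOn_le_sqrt_two_mul_eVariationOn_fst {α : Type*} [LinearOrder α] {c : α → Mink}
    {s : Set α} (hc : ∀ x ∈ s, ∀ y ∈ s, x ≤ y → causalLE (c x) (c y)) :
    eVariationOn c s ≤ ENNReal.ofReal (Real.sqrt 2) * eVariationOn (fun t => (c t).ofLp.1) s :=
  eVariationOn_le_mul_of_edist_le fun x hx y hy hxy =>
    edist_le_sqrt_two_mul_edist_fst_of_causalLE (hc x hx y hy hxy)

theorem IsFDCausalOn.causalLE {c : ℝ → Mink} {I : Set ℝ} (hc : IsFDCausalOn c I) {s t : ℝ}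
    (hs : s ∈ I) (ht : t ∈ I) (hst : s ≤ t) : causalLE (c s) (c t) := by
  rcases hst.eq_or_lt with rfl | hlt
  · exact causalLE_refl _
  · exact (hc.2 s hs t ht hlt).1

/-- A future-directed causal curve contained in a causal diamond `J⁺(x) ∩ J⁻(y)` has
Euclidean length at most `√2 · (t(y) − t(x))`. -/
theorem minkowski_causal_curve_in_diamond_finite_length (a b : ℝ) (hab : a ≤ b)
    (x y : Mink) (c : ℝ → Mink) (hc : IsFDCausalOn c (Set.Icc a b))
    (him : ∀ s ∈ Set.Icc a b, c s ∈ Jplus x ∩ Jminus y) :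
    eVariationOn c (Set.Icc a b) ≤ ENNReal.ofReal (Real.sqrt 2 * (y.ofLp.1 - x.ofLp.1)) := by
  have ha : a ∈ Icc a b := left_mem_Icc.mpr hab
  have hb : b ∈ Icc a b := right_mem_Icc.mpr hab
  have htime : MonotoneOn (fun t => (c t).ofLp.1) (Icc a b) :=
    fun s hs t ht hst => (hc.causalLE hs ht hst).fst_le
  have hx : x.ofLp.1 ≤ (c a).ofLp.1 := causalLE.fst_le (him a ha).1
  have hy : (c b).ofLp.1 ≤ y.ofLp.1 := causalLE.fst_le (him b hb).2
  calc eVariationOn c (Icc a b)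
      ≤ ENNReal.ofReal (Real.sqrt 2) * eVariationOn (fun t => (c t).ofLp.1) (Icc a b) :=
        eVariationOn_le_sqrt_two_mul_eVariationOn_fst fun s hs t ht => hc.causalLE hs ht
    _ = ENNReal.ofReal (Real.sqrt 2 * ((c b).ofLp.1 - (c a).ofLp.1)) := by
        rw [← inter_self (Icc a b), htime.eVariationOn_eq ha hb,
          ENNReal.ofReal_mul (Real.sqrt_nonneg 2)]
    _ ≤ ENNReal.ofReal (Real.sqrt 2 * (y.ofLp.1 - x.ofLp.1)) := by gcongr
end
end

section
/- Curve limit lemma in Minkowski space-time: let b_n → b in [0,∞), let c_n : [0,b_n] → 𝕄 be maps satisfying c_n(t) − c_n(s) ∈ C and ‖c_n(t) − c_n(s)‖ ≤ t − s for all 0 ≤ s ≤ t ≤ b_n (1-Lipschitz causal curves), and suppose c_n(0) → x in 𝕄. Then there exist a subsequence (c_{n_k}) and a 1-Lipschitz map c : [0,b] → 𝕄 with c(0) = x and c(t) − c(s) ∈ C for all 0 ≤ s ≤ t ≤ b, such that c_{n_k}(s_k) → c(s) whenever s_k ∈ [0,b_{n_k}] and s_k → s ∈ [0,b]. -/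
noncomputable section

open Set Filter

/-!
Extend each `cₙ` to all of `ℝ` by composing it with the projection onto `[0, bₙ]`. The
extensions are 1-Lipschitz, hence equicontinuous, and bounded at every parameter because
`cₙ 0` converges. A diagonal subsequence converging on a countable dense set of parameters
then converges at every parameter by equicontinuity (the Arzelà–Ascoli argument). The causal
and Lipschitz inequalities pass to the limit because the cone `C` is closed, and
equicontinuity turns pointwise convergence into convergence along `sₖ → s`.
-/

open Metric Bornology Topology NNReal

theorem EquicontinuousAt.cauchySeq_of_mem_closure {ι X E : Type*} [Nonempty ι]
    [SemilatticeSup ι] [TopologicalSpace X] [PseudoMetricSpace E] {F : ι → X → E} {s : Set X}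
    {x : X} (hF : EquicontinuousAt F x) (hs : ∀ y ∈ s, CauchySeq (F · y))
    (hx : x ∈ closure s) : CauchySeq (F · x) := by
  refine Metric.cauchySeq_iff.2 fun ε hε => ?_
  obtain ⟨y, hys, hy⟩ : ∃ y ∈ s, ∀ i, dist (F i x) (F i y) < ε / 3 :=
    (mem_closure_iff_frequently.1 hx).and_eventually
      (Metric.equicontinuousAt_iff_right.1 hF _ (by positivity)) |>.exists
  obtain ⟨N, hN⟩ := Metric.cauchySeq_iff.1 (hs y hys) (ε / 3) (by positivity)
  refine ⟨N, fun m hm n hn => ?_⟩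
  calc dist (F m x) (F n x)
      ≤ dist (F m x) (F m y) + dist (F m y) (F n y) + dist (F n y) (F n x) := dist_triangle4 ..
    _ < ε / 3 + ε / 3 + ε / 3 := by
        gcongr
        · exact hy m
        · exact hN m hm n hn
        · rw [dist_comm]; exact hy n
    _ = ε := by ring

theorem EquicontinuousAt.tendsto_apply_of_tendsto {ι X E : Type*} [TopologicalSpace X]
    [PseudoMetricSpace E] {F : ι → X → E} {l : Filter ι} {u : ι → X} {x : X} {z : E}
    (hF : EquicontinuousAt F x) (hFx : Tendsto (F · x) l (𝓝 z)) (hu : Tendsto u l (𝓝 x)) :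
    Tendsto (fun i => F i (u i)) l (𝓝 z) := by
  refine Metric.tendsto_nhds.2 fun ε hε => ?_
  filter_upwards [hu.eventually (Metric.equicontinuousAt_iff_right.1 hF _ (half_pos hε)),
    Metric.tendsto_nhds.1 hFx _ (half_pos hε)] with i hu hFx
  calc dist (F i (u i)) z ≤ dist (F i (u i)) (F i x) + dist (F i x) z := dist_triangle ..
    _ < ε / 2 + ε / 2 := by
        gcongr
        rw [dist_comm]; exact hu i
    _ = ε := add_halves ε

theorem exists_subseq_tendsto_of_equicontinuous {X E : Type*} [TopologicalSpace X]
    [TopologicalSpace.SeparableSpace X] [MetricSpace E] [ProperSpace E] {f : ℕ → X → E}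
    (hf : Equicontinuous f) (hb : ∀ x, IsBounded (range fun n => f n x)) :
    ∃ φ : ℕ → ℕ, StrictMono φ ∧
      ∃ g : X → E, ∀ x, Tendsto (fun k => f (φ k) x) atTop (𝓝 (g x)) := by
  obtain ⟨D, hDc, hDd⟩ := TopologicalSpace.exists_countable_dense X
  have := hDc.to_subtype
  obtain ⟨_, -, φ, hφ, hφD⟩ :=
    (isCompact_univ_pi fun q : D => (hb q).isCompact_closure).tendsto_subseq
      (x := fun n (q : D) => f n q) fun n q _ => subset_closure ⟨n, rfl⟩
  have hcauchy (x : X) : CauchySeq fun k => f (φ k) x :=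
    (hf x).comp φ |>.cauchySeq_of_mem_closure
      (fun y hy => (tendsto_pi_nhds.1 hφD ⟨y, hy⟩).cauchySeq) (hDd x)
  choose g hg using fun x => cauchySeq_tendsto_of_complete (hcauchy x)
  exact ⟨φ, hφ, g, hg⟩

theorem isBounded_range_apply_of_lipschitzWith {ι X E : Type*} [PseudoMetricSpace X]
    [PseudoMetricSpace E] {f : ι → X → E} {K : ℝ≥0} (hf : ∀ i, LipschitzWith K (f i))
    {x₀ : X} (h₀ : IsBounded (range fun i => f i x₀)) (x : X) :
    IsBounded (range fun i => f i x) := by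
  obtain ⟨C, hC⟩ := isBounded_range_iff.1 h₀
  refine isBounded_range_iff.2 ⟨K * dist x x₀ + C + K * dist x₀ x, fun i j => ?_⟩
  calc dist (f i x) (f j x)
      ≤ dist (f i x) (f i x₀) + dist (f i x₀) (f j x₀) + dist (f j x₀) (f j x) :=
        dist_triangle4 ..
    _ ≤ K * dist x x₀ + C + K * dist x₀ x := by
        gcongr
        exacts [(hf i).dist_le_mul _ _, hC i j, (hf j).dist_le_mul _ _]

theorem isClosed_causalCone : IsClosed causalCone :=
  isClosed_le (continuous_norm.comp (WithLp.continuous_snd ..)) (WithLp.continuous_fst ..)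

def IsCausalCurveOn (c : ℝ → Mink) (a b : ℝ) : Prop :=
  ∀ s t : ℝ, a ≤ s → s ≤ t → t ≤ b →
    c t - c s ∈ causalCone ∧ ‖c t - c s‖ ≤ t - s

namespace IsCausalCurveOn

variable {c : ℝ → Mink} {a b : ℝ}

theorem lipschitzOnWith (hc : IsCausalCurveOn c a b) : LipschitzOnWith 1 c (Icc a b) := by
  refine LipschitzOnWith.of_dist_le_mul fun s hs t ht => ?_
  rw [NNReal.coe_one, one_mul, dist_eq_norm, Real.dist_eq]
  rcases le_total s t with hst | hts
  · rw [← norm_neg, neg_sub, abs_sub_comm, abs_of_nonneg (sub_nonneg.2 hst)]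
    exact (hc s t hs.1 hst ht.2).2
  · rw [abs_of_nonneg (sub_nonneg.2 hts)]
    exact (hc t s ht.1 hts hs.2).2

theorem comp_projIcc (hc : IsCausalCurveOn c a b) (h : a ≤ b) (a' b' : ℝ) :
    IsCausalCurveOn (fun t => c (projIcc a b h t)) a' b' := by
  intro s t _ hst _
  have hproj : (projIcc a b h s : ℝ) ≤ projIcc a b h t := monotone_projIcc h hst
  obtain ⟨hcone, hnorm⟩ := hc _ _ (projIcc a b h s).2.1 hproj (projIcc a b h t).2.2
  refine ⟨hcone, hnorm.trans ?_⟩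
  calc (projIcc a b h t : ℝ) - projIcc a b h s
      ≤ |(projIcc a b h t : ℝ) - projIcc a b h s| := le_abs_self _
    _ ≤ |t - s| := abs_projIcc_sub_projIcc h
    _ = t - s := abs_of_nonneg (sub_nonneg.2 hst)

theorem lipschitzWith_comp_projIcc (hc : IsCausalCurveOn c a b) (h : a ≤ b) :
    LipschitzWith 1 fun t => c (projIcc a b h t) := by
  have := hc.lipschitzOnWith.comp
    ((LipschitzWith.subtype_val _).comp (LipschitzWith.projIcc h)).lipschitzOnWith
    fun t (_ : t ∈ univ) => (projIcc a b h t).2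
  rwa [mul_one, mul_one, lipschitzOnWith_univ] at this

theorem of_tendsto {ι : Type*} {l : Filter ι} [l.NeBot] {f : ι → ℝ → Mink}
    (hf : ∀ i, IsCausalCurveOn (f i) a b) (hc : ∀ t, Tendsto (fun i => f i t) l (𝓝 (c t))) :
    IsCausalCurveOn c a b := by
  intro s t hs hst ht
  have hlim := (hc t).sub (hc s)
  exact ⟨isClosed_causalCone.mem_of_tendsto hlim (.of_forall fun i => (hf i s t hs hst ht).1),
    le_of_tendsto hlim.norm (.of_forall fun i => (hf i s t hs hst ht).2)⟩

end IsCausalCurveOn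

theorem minkowski_curve_limit_lemma_general (b : ℝ) (bn : ℕ → ℝ)
    (hbn : ∀ n, 0 ≤ bn n)
    (x : Mink) (cn : ℕ → ℝ → Mink)
    (hcn : ∀ n, ∀ s t : ℝ, 0 ≤ s → s ≤ t → t ≤ bn n →
      cn n t - cn n s ∈ causalCone ∧ ‖cn n t - cn n s‖ ≤ t - s)
    (hx : Filter.Tendsto (fun n => cn n 0) Filter.atTop (nhds x)) :
    ∃ φ : ℕ → ℕ, StrictMono φ ∧ ∃ c : ℝ → Mink,
      c 0 = x ∧
      (∀ s t : ℝ, 0 ≤ s → s ≤ t → t ≤ b →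
        c t - c s ∈ causalCone ∧ ‖c t - c s‖ ≤ t - s) ∧
      ∀ (sk : ℕ → ℝ) (s : ℝ), (∀ k, sk k ∈ Set.Icc 0 (bn (φ k))) →
        Filter.Tendsto sk Filter.atTop (nhds s) → s ∈ Set.Icc 0 b →
        Filter.Tendsto (fun k => cn (φ k) (sk k)) Filter.atTop (nhds (c s)) := by
  let d n t := cn n (projIcc 0 (bn n) (hbn n) t)
  have hd_causal n : IsCausalCurveOn (d n) 0 b :=
    IsCausalCurveOn.comp_projIcc (hcn n) (hbn n) 0 b
  have hd_lip n : LipschitzWith 1 (d n) :=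
    IsCausalCurveOn.lipschitzWith_comp_projIcc (hcn n) (hbn n)
  have hd_zero n : d n 0 = cn n 0 := by simp [d]
  have hd_equi : Equicontinuous d :=
    (LipschitzWith.uniformEquicontinuous d 1 hd_lip).equicontinuous
  obtain ⟨φ, hφ, c, hc⟩ := exists_subseq_tendsto_of_equicontinuous hd_equi
    (isBounded_range_apply_of_lipschitzWith hd_lip (x₀ := 0)
      (by simpa [hd_zero] using isBounded_range_of_tendsto _ hx))
  refine ⟨φ, hφ, c, ?_, IsCausalCurveOn.of_tendsto (fun k => hd_causal (φ k)) hc, ?_⟩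
  · refine tendsto_nhds_unique (hc 0) ?_
    simpa [hd_zero, Function.comp_def] using hx.comp hφ.tendsto_atTop
  · intro sk s hsk hsks _
    have hd_sk k : cn (φ k) (sk k) = d (φ k) (sk k) := by simp [d, projIcc_of_mem _ (hsk k)]
    simpa only [hd_sk, Function.comp_apply] using
      ((hd_equi s).comp φ).tendsto_apply_of_tendsto (hc s) hsks

/-- Curve limit lemma in Minkowski space-time: given `bₙ → b` in `[0,∞)`, 1-Lipschitz
causal curves `cₙ : [0,bₙ] → 𝕄` with `cₙ 0 → x`, there are a subsequence and a 1-Lipschitz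
causal limit curve `c : [0,b] → 𝕄` with `c 0 = x`, to which the subsequence converges
uniformly (expressed via convergence along arbitrary parameter sequences `sₖ → s`). -/
theorem minkowski_curve_limit_lemma (b : ℝ) (hb : 0 ≤ b) (bn : ℕ → ℝ)
    (hbn : ∀ n, 0 ≤ bn n) (hbnlim : Filter.Tendsto bn Filter.atTop (nhds b))
    (x : Mink) (cn : ℕ → ℝ → Mink)
    (hcn : ∀ n, ∀ s t : ℝ, 0 ≤ s → s ≤ t → t ≤ bn n →
      cn n t - cn n s ∈ causalCone ∧ ‖cn n t - cn n s‖ ≤ t - s)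
    (hx : Filter.Tendsto (fun n => cn n 0) Filter.atTop (nhds x)) :
    ∃ φ : ℕ → ℕ, StrictMono φ ∧ ∃ c : ℝ → Mink,
      c 0 = x ∧
      (∀ s t : ℝ, 0 ≤ s → s ≤ t → t ≤ b →
        c t - c s ∈ causalCone ∧ ‖c t - c s‖ ≤ t - s) ∧
      ∀ (sk : ℕ → ℝ) (s : ℝ), (∀ k, sk k ∈ Set.Icc 0 (bn (φ k))) →
        Filter.Tendsto sk Filter.atTop (nhds s) → s ∈ Set.Icc 0 b →
        Filter.Tendsto (fun k => cn (φ k) (sk k)) Filter.atTop (nhds (c s)) :=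
  minkowski_curve_limit_lemma_general b bn hbn x cn hcn hx
end
end
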